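/- arXiv:0911.2051 — 4 statements merged into one kernel-verified Lean document; each statement's English description precedes it below -/
import Mathlib

section
/- Let U be an ℓ-dimensional linear subspace of R^D. Then the projection onto the first ℓ coordinates maps U ∩ Z^D onto Z^ℓ if and only if U is the row space of a matrix of the form (I J), where I is the ℓ×ℓ identity matrix and J is an ℓ×(D−ℓ) integer matrix. -/
/-- A point of `ℝ^n` is a lattice point if all its coordinates are integers. -/
def isInt {n : ℕ} (x : Fin n → ℝ) : Prop := ∀ i, ∃ z : ℤ, x i = (z : ℝ)

lemma span_eq_of_mem (D ℓ : ℕ) (hℓ : ℓ ≤ D) (U : Submodule ℝ (Fin D → ℝ))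
    (hdim : Module.finrank ℝ U = ℓ) (v : Fin ℓ → Fin D → ℝ)
    (hproj : ∀ i j, v i (Fin.castLE hℓ j) = if j = i then (1:ℝ) else 0)
    (hmem : ∀ i, v i ∈ U) : U = Submodule.span ℝ (Set.range v) := by
  classical
  have hle : Submodule.span ℝ (Set.range v) ≤ U := by
    rw [Submodule.span_le]
    rintro _ ⟨i, rfl⟩
    exact hmem i
  have hli : LinearIndependent ℝ v := by
    have : LinearIndependent ℝ ((LinearMap.funLeft ℝ ℝ (Fin.castLE hℓ)) ∘ v) := by
      have heq : (LinearMap.funLeft ℝ ℝ (Fin.castLE hℓ)) ∘ v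
          = ⇑(Pi.basisFun ℝ (Fin ℓ)) := by
        funext i j
        simp [LinearMap.funLeft_apply, hproj i j, Pi.basisFun_apply, Pi.single_apply]
      rw [heq]
      exact (Pi.basisFun ℝ (Fin ℓ)).linearIndependent
    exact this.of_comp _
  have hfr : Module.finrank ℝ (Submodule.span ℝ (Set.range v)) = ℓ := by
    rw [finrank_span_eq_card hli]
    simp
  exact (Submodule.eq_of_le_of_finrank_le hle (by rw [hfr, hdim])).symm

/-- An `ℓ`-dimensional subspace `U ⊆ ℝ^D` projects its lattice points onto `ℤ^ℓ`
(under the projection to the first `ℓ` coordinates) if and only if `U` is the row space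
of a matrix `(I J)` with `I` the `ℓ×ℓ` identity and `J` an integer `ℓ×(D-ℓ)` matrix. -/
theorem integral_subspace_iff_rowspace (D ℓ : ℕ) (hℓ : ℓ ≤ D)
    (U : Submodule ℝ (Fin D → ℝ)) (hdim : Module.finrank ℝ U = ℓ) :
    ((fun x : Fin D → ℝ => fun i : Fin ℓ => x (Fin.castLE hℓ i)) ''
        {x | x ∈ U ∧ isInt x} = {z : Fin ℓ → ℝ | isInt z})
    ↔ ∃ J : Fin ℓ → Fin (D - ℓ) → ℤ,
        U = Submodule.span ℝ (Set.range fun i : Fin ℓ => (fun j : Fin D =>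
          if hj : (j : ℕ) < ℓ then (if (j : ℕ) = (i : ℕ) then (1 : ℝ) else 0)
          else ((J i ⟨(j : ℕ) - ℓ, by have := j.2; omega⟩ : ℤ) : ℝ))) := by
  classical
  constructor
  · intro h
    have hmem : ∀ i : Fin ℓ, (fun j : Fin ℓ => if j = i then (1:ℝ) else 0) ∈
        ((fun x : Fin D → ℝ => fun i : Fin ℓ => x (Fin.castLE hℓ i)) ''
          {x | x ∈ U ∧ isInt x}) := by
      intro i
      rw [h]
      intro j
      exact ⟨if j = i then 1 else 0, by split_ifs <;> simp_all⟩
    choose x hx hπ using hmem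
    have hxU : ∀ i, x i ∈ U := fun i => (hx i).1
    have hxInt : ∀ i, isInt (x i) := fun i => (hx i).2
    choose w hw using hxInt
    refine ⟨fun i j => w i ⟨ℓ + j, by have := j.2; omega⟩, ?_⟩
    set v : Fin ℓ → Fin D → ℝ := fun i : Fin ℓ => (fun j : Fin D =>
          if hj : (j : ℕ) < ℓ then (if (j : ℕ) = (i : ℕ) then (1 : ℝ) else 0)
          else ((w i ⟨ℓ + (⟨(j : ℕ) - ℓ, by have := j.2; omega⟩ : Fin (D - ℓ)), by
            have := j.2; omega⟩ : ℤ) : ℝ)) with hvdef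
    have hvx : ∀ i, v i = x i := by
      intro i
      funext k
      by_cases hk : (k : ℕ) < ℓ
      · have h2 : Fin.castLE hℓ (⟨(k:ℕ), hk⟩ : Fin ℓ) = k := by
          apply Fin.ext; simp
        have h1 : x i k = if (⟨(k:ℕ), hk⟩ : Fin ℓ) = i then 1 else 0 := by
          simpa [h2] using congrFun (hπ i) ⟨(k:ℕ), hk⟩
        simp only [hvdef, dif_pos hk, h1]
        congr 1
        simp [Fin.ext_iff]
      · have h3 : (⟨ℓ + ((k:ℕ) - ℓ), by have := k.2; omega⟩ : Fin D) = k := by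
          apply Fin.ext; simp; omega
        simp only [hvdef, dif_neg hk]
        rw [h3] at *
        exact (hw i _).symm
    have hproj : ∀ i j, v i (Fin.castLE hℓ j) = if j = i then (1:ℝ) else 0 := by
      intro i j
      simp only [hvdef]
      rw [dif_pos (by simpa using j.2 : ((Fin.castLE hℓ j : Fin D) : ℕ) < ℓ)]
      congr 1
      simp [Fin.ext_iff]
    exact span_eq_of_mem D ℓ hℓ U hdim v hproj (fun i => (hvx i) ▸ hxU i)
  · rintro ⟨J, hU⟩
    set v : Fin ℓ → Fin D → ℝ := fun i : Fin ℓ => (fun j : Fin D =>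
          if hj : (j : ℕ) < ℓ then (if (j : ℕ) = (i : ℕ) then (1 : ℝ) else 0)
          else ((J i ⟨(j : ℕ) - ℓ, by have := j.2; omega⟩ : ℤ) : ℝ)) with hvdef
    have hint : ∀ i k, ∃ z : ℤ, v i k = (z : ℝ) := by
      intro i k
      by_cases hk : (k:ℕ) < ℓ
      · refine ⟨if (k:ℕ) = (i:ℕ) then 1 else 0, ?_⟩
        simp only [hvdef, dif_pos hk]
        split <;> simp
      · exact ⟨J i ⟨(k:ℕ) - ℓ, by have := k.2; omega⟩, by simp only [hvdef, dif_neg hk]⟩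
    have hproj : ∀ i j, v i (Fin.castLE hℓ j) = if j = i then (1:ℝ) else 0 := by
      intro i j
      simp only [hvdef]
      rw [dif_pos (by simpa using j.2 : ((Fin.castLE hℓ j : Fin D) : ℕ) < ℓ)]
      congr 1
      simp [Fin.ext_iff]
    apply Set.Subset.antisymm
    · rintro _ ⟨x, ⟨hxU, hxInt⟩, rfl⟩
      exact fun j => hxInt (Fin.castLE hℓ j)
    · intro z hz
      choose c hc using hz
      refine ⟨∑ i, (c i : ℝ) • v i, ⟨?_, ?_⟩, ?_⟩
      · rw [hU]
        exact Submodule.sum_mem _ fun i _ =>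
          Submodule.smul_mem _ _ (Submodule.subset_span ⟨i, rfl⟩)
      · intro k
        choose zz hzz using fun i => hint i k
        refine ⟨∑ i, c i * zz i, ?_⟩
        push_cast
        simp only [Finset.sum_apply, Pi.smul_apply, smul_eq_mul]
        exact Finset.sum_congr rfl fun i _ => by rw [hzz i]
      · funext j
        simp only [Finset.sum_apply, Pi.smul_apply, smul_eq_mul, hproj]
        simp [mul_ite, mul_one, mul_zero, Finset.sum_ite_eq, hc]
end

section
/- Let P be a polytope in R^D all of whose ℓ-dimensional faces F satisfy dim(π(F)) = ℓ, where π: R^D → R^m is the projection onto the first m coordinates and ℓ ≤ m ≤ D. Then for any (ℓ−1)-dimensional face F_0 of π(P), the preimage slice π^{-1}(F_0) ∩ P is an (ℓ−1)-dimensional face of P. -/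
/-!
If `l` exposes `F₀` in `π(P)`, the slice `π⁻¹(F₀) ∩ P` is the face of `P` exposed by `l ∘ π`, and
`π` maps it onto `F₀`, so its dimension is at least `ℓ - 1`. If it were larger, it would contain an
`ℓ`-dimensional face `F` of `P`: a polytope has faces of every dimension below its own, since it
has a facet and a face of a face is a face. But `π(F) ⊆ F₀` has dimension at most `ℓ - 1`, against
the hypothesis. A facet exists because a proper face of codimension at least two can always be
enlarged, by rotating its supporting functional about it.
-/

open Module Filter Topology

theorem vectorSpan_le_ker_of_apply_eq {R E M : Type*} [Ring R] [AddCommGroup E] [Module R E]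
    [AddCommGroup M] [Module R M] {s : Set E} {f : E →ₗ[R] M}
    (hf : ∀ v ∈ s, ∀ w ∈ s, f v = f w) : vectorSpan R s ≤ LinearMap.ker f := by
  rw [vectorSpan_def, Submodule.span_le]
  rintro _ ⟨v, hv, w, hw, rfl⟩
  simp [hf v hv w hw]

theorem finrank_vectorSpan_image_le {K E F : Type*} [DivisionRing K] [AddCommGroup E] [Module K E]
    [FiniteDimensional K E] [AddCommGroup F] [Module K F] (f : E →ₗ[K] F) (s : Set E) :
    finrank K (vectorSpan K (f '' s)) ≤ finrank K (vectorSpan K s) := by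
  rw [← f.coe_toAffineMap, ← AffineMap.map_vectorSpan]
  exact Submodule.finrank_map_le _ _

theorem Submodule.finrank_le_finrank_inf_ker_add_one {K E : Type*} [Field K] [AddCommGroup E]
    [Module K E] [FiniteDimensional K E] (V : Submodule K E) (f : E →ₗ[K] K) :
    finrank K V ≤ finrank K ↥(V ⊓ LinearMap.ker f) + 1 := by
  rcases eq_or_ne f 0 with rfl | hf
  · rw [LinearMap.ker_zero, inf_top_eq]
    omega
  have hker := Module.Dual.finrank_ker_add_one_of_ne_zero hf
  have hsup := Submodule.finrank_sup_add_finrank_inf_eq V (LinearMap.ker f)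
  have := Submodule.finrank_le (V ⊔ LinearMap.ker f)
  omega

namespace Finset

variable {E : Type*} [AddCommGroup E] [Module ℝ E]

noncomputable def maximizers (t : Finset E) (h : E →ₗ[ℝ] ℝ) : Finset E :=
  t.filter fun v => ∀ w ∈ t, h w ≤ h v

variable {t : Finset E} {h g : E →ₗ[ℝ] ℝ} {v w x₀ : E}

@[simp]
theorem mem_maximizers : v ∈ t.maximizers h ↔ v ∈ t ∧ ∀ w ∈ t, h w ≤ h v := mem_filter

theorem maximizers_subset (t : Finset E) (h : E →ₗ[ℝ] ℝ) : t.maximizers h ⊆ t := filter_subset _ _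

theorem Nonempty.maximizers (ht : t.Nonempty) (h : E →ₗ[ℝ] ℝ) : (t.maximizers h).Nonempty := by
  obtain ⟨v, hv, hmax⟩ := t.exists_max_image h ht
  exact ⟨v, mem_maximizers.2 ⟨hv, hmax⟩⟩

theorem apply_eq_of_mem_maximizers (hv : v ∈ t.maximizers h) (hw : w ∈ t.maximizers h) :
    h v = h w :=
  le_antisymm ((mem_maximizers.1 hw).2 v (mem_maximizers.1 hv).1)
    ((mem_maximizers.1 hv).2 w (mem_maximizers.1 hw).1)

theorem apply_lt_of_mem_maximizers (hv : v ∈ t.maximizers h) (hw : w ∈ t)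
    (hw' : w ∉ t.maximizers h) : h w < h v := by
  simp only [mem_maximizers, hw, true_and, not_forall, not_le] at hw'
  obtain ⟨u, hu, hlt⟩ := hw'
  exact hlt.trans_le ((mem_maximizers.1 hv).2 u hu)

theorem vectorSpan_maximizers_le_ker : vectorSpan ℝ (t.maximizers h : Set E) ≤ LinearMap.ker h :=
  vectorSpan_le_ker_of_apply_eq fun _ hv _ hw => apply_eq_of_mem_maximizers hv hw

theorem finrank_vectorSpan_maximizers_lt [FiniteDimensional ℝ E] (hne : (t.maximizers h).Nonempty)
    (hne' : t.maximizers h ≠ t) :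
    finrank ℝ (vectorSpan ℝ (t.maximizers h : Set E)) < finrank ℝ (vectorSpan ℝ (t : Set E)) := by
  obtain ⟨x₀, hx₀⟩ := hne
  obtain ⟨w, hw, hw'⟩ := exists_of_ssubset ((maximizers_subset t h).ssubset_of_ne hne')
  refine Submodule.finrank_lt_finrank_of_lt <|
    (vectorSpan_mono ℝ (coe_subset.2 (maximizers_subset t h))).lt_of_ne fun heq => ?_
  have hker : w -ᵥ x₀ ∈ LinearMap.ker h := vectorSpan_maximizers_le_ker <|
    heq ▸ vsub_mem_vectorSpan ℝ (mem_coe.2 hw) (mem_coe.2 (maximizers_subset t h hx₀))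
  have := apply_lt_of_mem_maximizers hx₀ hw hw'
  simp only [vsub_eq_sub, LinearMap.mem_ker, map_sub] at hker
  linarith

theorem exists_pos_maximizers_ssubset_maximizers_add_smul (hx₀ : x₀ ∈ t.maximizers h)
    (hg : ∀ v ∈ t.maximizers h, g v = g x₀) (hw : w ∈ t) (hgw : g x₀ < g w) :
    ∃ s : ℝ, 0 < s ∧ t.maximizers h ⊂ t.maximizers (h + s • g) := by
  classical
  -- `s` is the first slope at which `h + s • g` ties a vertex with larger `g`-value with `x₀`
  obtain ⟨w₁, hw₁T, hmin⟩ := (t.filter fun w => g x₀ < g w).exists_min_image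
    (fun w => (h x₀ - h w) / (g w - g x₀)) ⟨w, mem_filter.2 ⟨hw, hgw⟩⟩
  rw [mem_filter] at hw₁T
  have hw₁ : w₁ ∉ t.maximizers h := fun hmem => (hg w₁ hmem).not_gt hw₁T.2
  set s := (h x₀ - h w₁) / (g w₁ - g x₀)
  have hs : 0 < s :=
    div_pos (sub_pos.2 (apply_lt_of_mem_maximizers hx₀ hw₁T.1 hw₁)) (sub_pos.2 hw₁T.2)
  have hle : ∀ w ∈ t, (h + s • g) w ≤ (h + s • g) x₀ := by
    intro w hw
    simp only [LinearMap.add_apply, LinearMap.smul_apply, smul_eq_mul]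
    rcases le_or_gt (g w) (g x₀) with hgw | hgw
    · linarith [(mem_maximizers.1 hx₀).2 w hw, mul_le_mul_of_nonneg_left hgw hs.le]
    · have := hmin w (mem_filter.2 ⟨hw, hgw⟩)
      rw [le_div_iff₀ (sub_pos.2 hgw)] at this
      linarith
  have hmem : ∀ v ∈ t, (h + s • g) v = (h + s • g) x₀ → v ∈ t.maximizers (h + s • g) :=
    fun v hv heq => mem_maximizers.2 ⟨hv, fun w hw => heq ▸ hle w hw⟩
  refine ⟨s, hs, (ssubset_iff_of_subset fun v hv => ?_).2 ⟨w₁, hmem w₁ hw₁T.1 ?_, hw₁⟩⟩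
  · refine hmem v (maximizers_subset t h hv) ?_
    simp [apply_eq_of_mem_maximizers hv hx₀, hg v hv]
  · have : s * (g w₁ - g x₀) = h x₀ - h w₁ := div_mul_cancel₀ _ (sub_pos.2 hw₁T.2).ne'
    simp only [LinearMap.add_apply, LinearMap.smul_apply, smul_eq_mul]
    linarith

/-- `V ⊓ ker h` has codimension at most one in `V`, so some `g` vanishing on the face is not
proportional to `h` on `V`; rotating `h` in the direction `±g` enlarges the face without reaching
all of `t`. -/
theorem exists_maximizers_ssubset_ne [FiniteDimensional ℝ E] (hne : (t.maximizers h).Nonempty)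
    (hcodim : finrank ℝ (vectorSpan ℝ (t.maximizers h : Set E)) + 2 ≤
      finrank ℝ (vectorSpan ℝ (t : Set E))) :
    ∃ h', t.maximizers h ⊂ t.maximizers h' ∧ t.maximizers h' ≠ t := by
  obtain ⟨x₀, hx₀⟩ := hne
  set A := vectorSpan ℝ (t.maximizers h : Set E)
  set V := vectorSpan ℝ (t : Set E)
  have hAV : A < V ⊓ LinearMap.ker h := by
    refine lt_of_le_of_ne (le_inf (vectorSpan_mono ℝ (coe_subset.2 (maximizers_subset t h)))
      vectorSpan_maximizers_le_ker) fun heq => ?_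
    have := V.finrank_le_finrank_inf_ker_add_one h
    rw [← heq] at this
    omega
  obtain ⟨u, ⟨huV, huh⟩, huA⟩ := SetLike.exists_of_lt hAV
  obtain ⟨g, hgu, hAg⟩ := Submodule.exists_le_ker_of_notMem huA
  have rotate : ∀ g' : E →ₗ[ℝ] ℝ, g' u ≠ 0 → A ≤ LinearMap.ker g' → ∀ w ∈ t, g' x₀ < g' w →
      ∃ h', t.maximizers h ⊂ t.maximizers h' ∧ t.maximizers h' ≠ t := by
    intro g' hg'u hAg' w hw hw'
    have hconst : ∀ v ∈ t.maximizers h, g' v = g' x₀ := fun v hv => by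
      simpa [sub_eq_zero] using hAg' (vsub_mem_vectorSpan ℝ (mem_coe.2 hv) (mem_coe.2 hx₀))
    obtain ⟨s, hs, hss⟩ := exists_pos_maximizers_ssubset_maximizers_add_smul hx₀ hconst hw hw'
    refine ⟨h + s • g', hss, fun heq => ?_⟩
    have : u ∈ LinearMap.ker (h + s • g') := (heq ▸ vectorSpan_maximizers_le_ker) huV
    have hhu : h u = 0 := huh
    simp [hhu, hs.ne', hg'u] at this
  have hnonconst : ∃ w ∈ t, g w ≠ g x₀ := by
    by_contra! hconst
    exact hgu (vectorSpan_le_ker_of_apply_eq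
      (fun v hv w hw => (hconst v hv).trans (hconst w hw).symm) huV)
  obtain ⟨w, hw, hgw⟩ := hnonconst
  rcases hgw.lt_or_gt with hlt | hgt
  · exact rotate (-g) (by simpa using hgu) (fun a ha => by simpa using hAg ha) w hw
      (by simpa using hlt)
  · exact rotate g hgu hAg w hw hgt

theorem exists_maximizers_finrank_add_one_of_ne [FiniteDimensional ℝ E] {h : E →ₗ[ℝ] ℝ}
    (hne : (t.maximizers h).Nonempty) (hne' : t.maximizers h ≠ t) :
    ∃ h', (t.maximizers h').Nonempty ∧
      finrank ℝ (vectorSpan ℝ (t.maximizers h' : Set E)) + 1 =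
        finrank ℝ (vectorSpan ℝ (t : Set E)) := by
  have hlt := finrank_vectorSpan_maximizers_lt hne hne'
  by_cases hfacet : finrank ℝ (vectorSpan ℝ (t.maximizers h : Set E)) + 1 =
      finrank ℝ (vectorSpan ℝ (t : Set E))
  · exact ⟨h, hne, hfacet⟩
  obtain ⟨h', hss, hne''⟩ := exists_maximizers_ssubset_ne hne (by omega)
  exact exists_maximizers_finrank_add_one_of_ne (hne.mono hss.subset) hne''
termination_by t.card - (t.maximizers h).card
decreasing_by
  have := card_lt_card hss
  have := card_le_card (maximizers_subset t h')
  omega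

theorem exists_maximizers_finrank_add_one [FiniteDimensional ℝ E]
    (ht : 0 < finrank ℝ (vectorSpan ℝ (t : Set E))) :
    ∃ h, (t.maximizers h).Nonempty ∧
      finrank ℝ (vectorSpan ℝ (t.maximizers h : Set E)) + 1 =
        finrank ℝ (vectorSpan ℝ (t : Set E)) := by
  obtain ⟨u, huV, hu⟩ := Submodule.exists_mem_ne_zero_of_ne_bot (Submodule.one_le_finrank_iff.1 ht)
  obtain ⟨h, hhu, -⟩ :=
    Submodule.exists_le_ker_of_notMem (p := (⊥ : Submodule ℝ E)) (by simpa using hu)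
  have htne : t.Nonempty := by
    rcases t.eq_empty_or_nonempty with rfl | htne
    · rw [coe_empty, vectorSpan_empty, finrank_bot] at ht
      exact absurd ht (lt_irrefl 0)
    · exact htne
  refine exists_maximizers_finrank_add_one_of_ne (htne.maximizers h) fun heq => hhu ?_
  exact (heq ▸ vectorSpan_maximizers_le_ker : vectorSpan ℝ (t : Set E) ≤ LinearMap.ker h) huV

/-- A small multiple of `g` only breaks the ties among the maximizers of `h`. -/
theorem eventually_maximizers_add_smul (t : Finset E) (h g : E →ₗ[ℝ] ℝ) :
    ∀ᶠ ε in 𝓝[>] (0 : ℝ), t.maximizers (h + ε • g) = (t.maximizers h).maximizers g := by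
  have hgap : ∀ᶠ ε in 𝓝[>] (0 : ℝ), ∀ v ∈ t, ∀ w ∈ t, h w < h v →
      (h + ε • g) w < (h + ε • g) v := by
    simp only [eventually_all_finset, eventually_imp_distrib_left]
    intro v _ w _ hlt
    have hcont : Continuous fun ε : ℝ => (h + ε • g) v - (h + ε • g) w := by
      simp only [LinearMap.add_apply, LinearMap.smul_apply, smul_eq_mul]
      fun_prop
    have := (hcont.tendsto 0).eventually_const_lt (u := 0) (by simpa using hlt)
    filter_upwards [nhdsWithin_le_nhds this] with ε hε
    linarith
  filter_upwards [hgap, self_mem_nhdsWithin] with ε hε (hε0 : 0 < ε)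
  ext x
  constructor
  · intro hx
    obtain ⟨hxt, hxmax⟩ := mem_maximizers.1 hx
    have hxh : x ∈ t.maximizers h := by
      by_contra hx'
      obtain ⟨v, hv⟩ := Nonempty.maximizers ⟨x, hxt⟩ h
      have hvt := maximizers_subset t h hv
      exact (hε v hvt x hxt (apply_lt_of_mem_maximizers hv hxt hx')).not_ge (hxmax v hvt)
    refine mem_maximizers.2 ⟨hxh, fun w hw => ?_⟩
    have := hxmax w (maximizers_subset t h hw)
    simp only [LinearMap.add_apply, LinearMap.smul_apply, smul_eq_mul,
      apply_eq_of_mem_maximizers hw hxh, add_le_add_iff_left] at this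
    exact le_of_mul_le_mul_left this hε0
  · intro hx
    obtain ⟨hxh, hxmax⟩ := mem_maximizers.1 hx
    refine mem_maximizers.2 ⟨maximizers_subset t h hxh, fun w hw => ?_⟩
    by_cases hwh : w ∈ t.maximizers h
    · simp only [LinearMap.add_apply, LinearMap.smul_apply, smul_eq_mul,
        apply_eq_of_mem_maximizers hwh hxh, add_le_add_iff_left]
      exact mul_le_mul_of_nonneg_left (hxmax w hwh) hε0.le
    · exact (hε x (maximizers_subset t h hxh) w hw (apply_lt_of_mem_maximizers hxh hw hwh)).le

theorem exists_maximizers_subset_finrank_eq [FiniteDimensional ℝ E] {h : E →ₗ[ℝ] ℝ} {k : ℕ}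
    (hne : (t.maximizers h).Nonempty)
    (hk : k ≤ finrank ℝ (vectorSpan ℝ (t.maximizers h : Set E))) :
    ∃ h', (t.maximizers h').Nonempty ∧ t.maximizers h' ⊆ t.maximizers h ∧
      finrank ℝ (vectorSpan ℝ (t.maximizers h' : Set E)) = k := by
  obtain hk | hk := hk.eq_or_lt
  · exact ⟨h, hne, subset_rfl, hk.symm⟩
  obtain ⟨g, hgne, hg⟩ := exists_maximizers_finrank_add_one (t := t.maximizers h) (by omega)
  obtain ⟨ε, hε⟩ := (eventually_maximizers_add_smul t h g).exists
  rw [← hε] at hgne hg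
  obtain ⟨h', hne', hsub, hdim⟩ := exists_maximizers_subset_finrank_eq hgne (k := k) (by omega)
  exact ⟨h', hne', hsub.trans (hε ▸ maximizers_subset _ _), hdim⟩
termination_by finrank ℝ (vectorSpan ℝ (t.maximizers h : Set E))
decreasing_by
  rw [hε]
  omega

end Finset

theorem IsExposed.preimage_inter {𝕜 E F : Type*} [TopologicalSpace 𝕜] [Semiring 𝕜] [Preorder 𝕜]
    [AddCommMonoid E] [TopologicalSpace E] [Module 𝕜 E] [AddCommMonoid F] [TopologicalSpace F]
    [Module 𝕜 F] (f : E →L[𝕜] F) {A : Set E} {B : Set F} (hB : IsExposed 𝕜 (f '' A) B) :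
    IsExposed 𝕜 A (f ⁻¹' B ∩ A) := by
  rintro ⟨x, hxB, hxA⟩
  obtain ⟨l, rfl⟩ := hB ⟨f x, hxB⟩
  refine ⟨l.comp f, Set.ext fun y => ?_⟩
  simp only [Set.mem_inter_iff, Set.mem_preimage, Set.mem_ofPred_eq, Set.forall_mem_image,
    ContinuousLinearMap.comp_apply]
  exact ⟨fun ⟨⟨_, hy⟩, hyA⟩ => ⟨hyA, hy⟩, fun ⟨hyA, hy⟩ => ⟨⟨⟨y, hyA, rfl⟩, hy⟩, hyA⟩⟩

theorem vectorSpan_convexHull {E : Type*} [AddCommGroup E] [Module ℝ E] (s : Set E) :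
    vectorSpan ℝ (convexHull ℝ s) = vectorSpan ℝ s := by
  rw [← direction_affineSpan, affineSpan_convexHull, direction_affineSpan]

section Polytope

variable {E : Type*} [NormedAddCommGroup E] [NormedSpace ℝ E] [FiniteDimensional ℝ E]

/-- The face is an extreme subset of `convexHull ℝ t`, so its extreme points are vertices in `t`,
and Krein–Milman recovers the face from them. -/
theorem convexHull_maximizers (t : Finset E) (h : E →ₗ[ℝ] ℝ) :
    {x ∈ convexHull ℝ (t : Set E) | ∀ y ∈ convexHull ℝ (t : Set E), h y ≤ h x} =
      convexHull ℝ (t.maximizers h : Set E) := by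
  set C := {x ∈ convexHull ℝ (t : Set E) | ∀ y ∈ convexHull ℝ (t : Set E), h y ≤ h x}
  have hC : IsExposed ℝ (convexHull ℝ (t : Set E)) C := fun _ => ⟨h.toContinuousLinearMap, rfl⟩
  have hCconv : Convex ℝ C := hC.convex (convex_convexHull ℝ _)
  refine subset_antisymm ?_ (convexHull_min (fun v hv => ?_) hCconv)
  · rw [← closure_convexHull_extremePoints (hC.isCompact (t.finite_toSet.isCompact_convexHull ℝ))
      hCconv]
    refine closure_minimal (convexHull_mono fun x hx => ?_)
      ((t.maximizers h).finite_toSet.isClosed_convexHull ℝ)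
    have hxt : x ∈ t := extremePoints_convexHull_subset
      (hC.isExtreme.extremePoints_subset_extremePoints hx)
    exact Finset.mem_maximizers.2 ⟨hxt, fun w hw => (extremePoints_subset hx).2 w
      (subset_convexHull ℝ _ hw)⟩
  · obtain ⟨hvt, hvmax⟩ := Finset.mem_maximizers.1 hv
    exact ⟨subset_convexHull ℝ _ hvt, fun y hy =>
      convexHull_min hvmax (convex_halfSpace_le h.isLinear (h v)) hy⟩

theorem IsExposed.exists_isExposed_subset_finrank_eq {s : Finset E} {S : Set E}
    (hS : IsExposed ℝ (convexHull ℝ (s : Set E)) S) (hne : S.Nonempty) {k : ℕ}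
    (hk : k ≤ finrank ℝ (vectorSpan ℝ S)) :
    ∃ F, IsExposed ℝ (convexHull ℝ (s : Set E)) F ∧ F.Nonempty ∧ F ⊆ S ∧
      finrank ℝ (vectorSpan ℝ F) = k := by
  obtain ⟨l, rfl⟩ := hS hne
  have hface := convexHull_maximizers s l
  simp only [ContinuousLinearMap.coe_coe] at hface
  rw [hface, convexHull_nonempty_iff, Finset.coe_nonempty] at hne
  rw [hface, vectorSpan_convexHull] at hk
  obtain ⟨h, hne', hsub, hdim⟩ := Finset.exists_maximizers_subset_finrank_eq hne hk
  exact ⟨convexHull ℝ (s.maximizers h : Set E),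
    fun _ => ⟨h.toContinuousLinearMap, (convexHull_maximizers s h).symm⟩,
    convexHull_nonempty_iff.2 hne', hface ▸ convexHull_mono hsub,
    by rw [vectorSpan_convexHull, hdim]⟩

end Polytope

theorem slice_over_face_is_face_general (D m ℓ : ℕ) (hℓ : 0 < ℓ) (hmD : m ≤ D)
    (P : Set (Fin D → ℝ)) (hP : ∃ s : Finset (Fin D → ℝ), P = convexHull ℝ (s : Set (Fin D → ℝ)))
    (π : (Fin D → ℝ) → (Fin m → ℝ)) (hπ : π = fun x => fun i => x (Fin.castLE hmD i))
    (hfaces : ∀ F : Set (Fin D → ℝ), IsExposed ℝ P F → F.Nonempty →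
      Module.finrank ℝ (vectorSpan ℝ F) = ℓ →
      Module.finrank ℝ (vectorSpan ℝ (π '' F)) = ℓ)
    (F₀ : Set (Fin m → ℝ)) (hF₀ : IsExposed ℝ (π '' P) F₀) (hF₀ne : F₀.Nonempty)
    (hF₀dim : Module.finrank ℝ (vectorSpan ℝ F₀) = ℓ - 1) :
    IsExposed ℝ P (π ⁻¹' F₀ ∩ P) ∧
    Module.finrank ℝ (vectorSpan ℝ (π ⁻¹' F₀ ∩ P)) = ℓ - 1 := by
  obtain ⟨s, rfl⟩ := hP
  obtain ⟨f, rfl⟩ : ∃ f : (Fin D → ℝ) →L[ℝ] (Fin m → ℝ), π = f :=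
    ⟨ContinuousLinearMap.pi fun i => ContinuousLinearMap.proj (Fin.castLE hmD i), hπ⟩
  have hS := hF₀.preimage_inter f
  have himage : f '' (f ⁻¹' F₀ ∩ convexHull ℝ ↑s) = F₀ := by
    rw [Set.image_preimage_inter, Set.inter_eq_left.2 hF₀.subset]
  have hSne : (f ⁻¹' F₀ ∩ convexHull ℝ ↑s).Nonempty := by
    rwa [← Set.image_nonempty, himage]
  refine ⟨hS, le_antisymm ?_ ?_⟩
  · by_contra! hlarge
    obtain ⟨F, hF, hFne, hFS, hFdim⟩ :=
      hS.exists_isExposed_subset_finrank_eq hSne (k := ℓ) (by omega)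
    have hπF : finrank ℝ (vectorSpan ℝ (f '' F)) ≤ ℓ - 1 := hF₀dim ▸
      Submodule.finrank_mono (vectorSpan_mono ℝ (himage ▸ Set.image_mono hFS))
    have := hfaces F hF hFne hFdim
    omega
  · calc ℓ - 1 = finrank ℝ (vectorSpan ℝ (f '' (f ⁻¹' F₀ ∩ convexHull ℝ ↑s))) := by
          rw [himage, hF₀dim]
      _ ≤ _ := finrank_vectorSpan_image_le f.toLinearMap _

/-- If `P ⊆ ℝ^D` is a polytope all of whose `ℓ`-dimensional faces `F` satisfy
`dim π(F) = ℓ` (where `π : ℝ^D → ℝ^m` projects to the first `m` coordinates,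
`0 < ℓ ≤ m ≤ D`), then for any `(ℓ-1)`-dimensional face `F₀` of `π(P)`, the slice
`π⁻¹(F₀) ∩ P` is an `(ℓ-1)`-dimensional face of `P`. -/
theorem slice_over_face_is_face (D m ℓ : ℕ) (hℓ : 0 < ℓ) (hℓm : ℓ ≤ m) (hmD : m ≤ D)
    (P : Set (Fin D → ℝ)) (hP : ∃ s : Finset (Fin D → ℝ), P = convexHull ℝ (s : Set (Fin D → ℝ)))
    (π : (Fin D → ℝ) → (Fin m → ℝ)) (hπ : π = fun x => fun i => x (Fin.castLE hmD i))
    (hfaces : ∀ F : Set (Fin D → ℝ), IsExposed ℝ P F → F.Nonempty →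
      Module.finrank ℝ (vectorSpan ℝ F) = ℓ →
      Module.finrank ℝ (vectorSpan ℝ (π '' F)) = ℓ)
    (F₀ : Set (Fin m → ℝ)) (hF₀ : IsExposed ℝ (π '' P) F₀) (hF₀ne : F₀.Nonempty)
    (hF₀dim : Module.finrank ℝ (vectorSpan ℝ F₀) = ℓ - 1) :
    IsExposed ℝ P (π ⁻¹' F₀ ∩ P) ∧
    Module.finrank ℝ (vectorSpan ℝ (π ⁻¹' F₀ ∩ P)) = ℓ - 1 :=
  slice_over_face_is_face_general D m ℓ hℓ hmD P hP π hπ hfaces F₀ hF₀ hF₀ne hF₀dim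
end

section
/- Let W be an ℓ-dimensional affine subspace of R^D whose direction lin(W) is integral (i.e., the projection to the first ℓ coordinates maps lin(W) ∩ Z^D onto Z^ℓ) and which contains a lattice point. For any 0 ≤ m ≤ ℓ and any y ∈ Z^m, the slice {w ∈ W : first m coordinates of w equal y} is an (ℓ−m)-dimensional affine subspace containing a lattice point, and its direction is integral with respect to the coordinates m+1, ..., D (that is, projecting to coordinates m+1,...,ℓ maps its intersection with Z^D onto Z^{ℓ−m}). -/
/-- Let `W ⊆ ℝ^D` be an `ℓ`-dimensional affine subspace containing a lattice point whose
direction `lin(W)` is integral (projection to the first `ℓ` coordinates maps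
`lin(W) ∩ ℤ^D` onto `ℤ^ℓ`). Then for `0 ≤ m ≤ ℓ` and `y ∈ ℤ^m`, the slice of `W` where the
first `m` coordinates equal `y` is an `(ℓ-m)`-dimensional affine subspace containing a
lattice point, whose direction is integral with respect to the coordinates `m+1, ..., D`. -/
theorem slice_of_integral_affine_subspace (D ℓ m : ℕ) (hm : m ≤ ℓ) (hℓ : ℓ ≤ D)
    (W : AffineSubspace ℝ (Fin D → ℝ)) (hWne : (W : Set (Fin D → ℝ)).Nonempty)
    (hdim : Module.finrank ℝ W.direction = ℓ)
    (hWlat : ∃ x ∈ W, isInt x)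
    (hWint : (fun x : Fin D → ℝ => fun i : Fin ℓ => x (Fin.castLE hℓ i)) ''
      {x | x ∈ W.direction ∧ isInt x} = {z : Fin ℓ → ℝ | isInt z})
    (y : Fin m → ℤ) :
    ∃ W' : AffineSubspace ℝ (Fin D → ℝ),
      (W' : Set (Fin D → ℝ)) =
        {w : Fin D → ℝ | w ∈ W ∧ ∀ i : Fin m, w (Fin.castLE (hm.trans hℓ) i) = (y i : ℝ)} ∧
      Module.finrank ℝ W'.direction = ℓ - m ∧
      (∃ x ∈ W', isInt x) ∧
      (fun x : Fin D → ℝ => fun i : Fin (ℓ - m) =>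
          x (⟨m + (i : ℕ), by have := i.2; omega⟩ : Fin D)) ''
        {x | x ∈ W'.direction ∧ isInt x} = {z : Fin (ℓ - m) → ℝ | isInt z} := by
  classical
  -- projection to first m coordinates
  set Pm : (Fin D → ℝ) →ₗ[ℝ] (Fin m → ℝ) :=
    { toFun := fun x i => x (Fin.castLE (hm.trans hℓ) i),
      map_add' := fun _ _ => rfl, map_smul' := fun _ _ => rfl } with hPm
  -- key: every integer vector in ℝ^ℓ lifts to an integral element of W.direction
  have key : ∀ t : Fin ℓ → ℤ, ∃ v, v ∈ W.direction ∧ isInt v ∧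
      ∀ i : Fin ℓ, v (Fin.castLE hℓ i) = (t i : ℝ) := by
    intro t
    have h1 : (fun i => (t i : ℝ)) ∈ {z : Fin ℓ → ℝ | isInt z} := fun i => ⟨t i, rfl⟩
    rw [← hWint] at h1
    obtain ⟨v, ⟨hv1, hv2⟩, hv3⟩ := h1
    exact ⟨v, hv1, hv2, fun i => by rw [← congrFun hv3 i]⟩
  -- the linear projection from W.direction to ℝ^ℓ
  set f : W.direction →ₗ[ℝ] (Fin ℓ → ℝ) :=
    { toFun := fun x i => (x : Fin D → ℝ) (Fin.castLE hℓ i),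
      map_add' := fun _ _ => rfl, map_smul' := fun _ _ => rfl } with hf
  have hsurj : Function.Surjective f := by
    have he : ∀ i : Fin ℓ,
        (fun j => if i = j then (1:ℝ) else 0) ∈ LinearMap.range f := by
      intro i
      obtain ⟨v, hv1, _, hv3⟩ := key (fun j => if i = j then 1 else 0)
      refine ⟨⟨v, hv1⟩, funext fun j => ?_⟩
      show v (Fin.castLE hℓ j) = _
      rw [hv3 j]
      by_cases h : i = j <;> simp [h]
    intro z
    have : z ∈ LinearMap.range f := by
      rw [pi_eq_sum_univ z]
      exact Submodule.sum_mem _ fun i _ => Submodule.smul_mem _ _ (he i)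
    exact this
  have hfr : Module.finrank ℝ W.direction = Module.finrank ℝ (Fin ℓ → ℝ) := by
    rw [hdim, Module.finrank_fin_fun]
  have hinj : Function.Injective f :=
    (LinearMap.injective_iff_surjective_of_finrank_eq_finrank hfr).mpr hsurj
  -- base point for the slice subspace
  set p₀ : Fin D → ℝ := fun j => if h : (j : ℕ) < m then (y ⟨j, h⟩ : ℝ) else 0 with hp₀
  set S : AffineSubspace ℝ (Fin D → ℝ) := AffineSubspace.mk' p₀ (LinearMap.ker Pm) with hS
  have hmemS : ∀ w : Fin D → ℝ, w ∈ S ↔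
      ∀ i : Fin m, w (Fin.castLE (hm.trans hℓ) i) = (y i : ℝ) := by
    intro w
    rw [hS, AffineSubspace.mem_mk', LinearMap.mem_ker]
    have hp : ∀ i : Fin m, p₀ (Fin.castLE (hm.trans hℓ) i) = (y i : ℝ) := by
      intro i
      simp only [hp₀, Fin.coe_castLE]
      rw [dif_pos i.2]
    constructor
    · intro h i
      have h0 : w (Fin.castLE (hm.trans hℓ) i) - p₀ (Fin.castLE (hm.trans hℓ) i) = 0 :=
        congrFun h i
      rw [hp i] at h0
      linarith
    · intro h
      funext i
      show w (Fin.castLE (hm.trans hℓ) i) - p₀ (Fin.castLE (hm.trans hℓ) i) = 0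
      rw [hp i, h i, sub_self]
  -- construct the integral point in the slice
  obtain ⟨x₀, hx₀W, hx₀int⟩ := hWlat
  set zx : Fin D → ℤ := fun j => (hx₀int j).choose with hzx
  have hzx' : ∀ j, x₀ j = (zx j : ℝ) := fun j => (hx₀int j).choose_spec
  obtain ⟨v₀, hv₀dir, hv₀int, hv₀⟩ := key
    (fun i => if h : (i : ℕ) < m then y ⟨i, h⟩ - zx (Fin.castLE hℓ i) else 0)
  set x : Fin D → ℝ := v₀ +ᵥ x₀ with hx
  have hxW : x ∈ W := AffineSubspace.vadd_mem_of_mem_direction hv₀dir hx₀W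
  have hxcoord : ∀ i : Fin m, x (Fin.castLE (hm.trans hℓ) i) = (y i : ℝ) := by
    intro i
    have h1 := hv₀ (Fin.castLE hm i)
    have h2 : Fin.castLE hℓ (Fin.castLE hm i) = Fin.castLE (hm.trans hℓ) i := rfl
    rw [h2] at h1
    have h3 : ((Fin.castLE hm i : Fin ℓ) : ℕ) < m := i.2
    rw [dif_pos h3] at h1
    have h4 : x (Fin.castLE (hm.trans hℓ) i)
        = v₀ (Fin.castLE (hm.trans hℓ) i) + x₀ (Fin.castLE (hm.trans hℓ) i) := rfl
    rw [h4, h1, hzx' (Fin.castLE (hm.trans hℓ) i)]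
    have h5 : (⟨((Fin.castLE hm i : Fin ℓ) : ℕ), h3⟩ : Fin m) = i := Fin.ext rfl
    rw [h5]
    push_cast
    ring
  have hxint : isInt x := by
    intro j
    obtain ⟨a, ha⟩ := hv₀int j
    exact ⟨a + zx j, by show v₀ j + x₀ j = _; rw [ha, hzx' j]; push_cast; ring⟩
  have hxS : x ∈ S := (hmemS x).mpr hxcoord
  -- direction of the slice
  have hdir : (W ⊓ S).direction = W.direction ⊓ LinearMap.ker Pm := by
    rw [AffineSubspace.direction_inf_of_mem hxW hxS, hS, AffineSubspace.direction_mk']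
  refine ⟨W ⊓ S, ?_, ?_, ⟨x, (AffineSubspace.mem_inf_iff x W S).mpr ⟨hxW, hxS⟩, hxint⟩, ?_⟩
  · ext w
    rw [Set.mem_setOf_eq, ← hmemS w]
    exact AffineSubspace.mem_inf_iff w W S
  · -- dimension
    rw [hdir]
    -- linear equiv onto ℝ^(ℓ-m)
    set g : (W.direction ⊓ LinearMap.ker Pm : Submodule ℝ (Fin D → ℝ)) →ₗ[ℝ]
        (Fin (ℓ - m) → ℝ) :=
      { toFun := fun x i => (x : Fin D → ℝ) (⟨m + (i : ℕ), by have := i.2; omega⟩ : Fin D),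
        map_add' := fun _ _ => rfl, map_smul' := fun _ _ => rfl } with hg
    have hginj : Function.Injective g := by
      intro a b hab
      obtain ⟨haW, haK⟩ := Submodule.mem_inf.mp a.2
      obtain ⟨hbW, hbK⟩ := Submodule.mem_inf.mp b.2
      have hfab : f ⟨(a : Fin D → ℝ), haW⟩ = f ⟨(b : Fin D → ℝ), hbW⟩ := by
        funext j
        simp only [hf, LinearMap.coe_mk, AddHom.coe_mk]
        by_cases h : (j : ℕ) < m
        · have h1 := congrFun (LinearMap.mem_ker.mp haK) ⟨j, h⟩
          have h2 := congrFun (LinearMap.mem_ker.mp hbK) ⟨j, h⟩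
          simp only [hPm, LinearMap.coe_mk, AddHom.coe_mk] at h1 h2
          have e1 : Fin.castLE (hm.trans hℓ) (⟨(j:ℕ), h⟩ : Fin m) = Fin.castLE hℓ j :=
            Fin.ext rfl
          rw [e1] at h1 h2
          simp only [Pi.zero_apply] at h1 h2
          rw [h1, h2]
        · have hj : (j : ℕ) - m < ℓ - m := by have := j.2; omega
          have h1 := congrFun hab ⟨(j : ℕ) - m, hj⟩
          simp only [hg, LinearMap.coe_mk, AddHom.coe_mk] at h1
          have e1 : (⟨m + ((j : ℕ) - m), by have := j.2; omega⟩ : Fin D)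
              = Fin.castLE hℓ j := Fin.ext (by simp; omega)
          rw [e1] at h1
          exact h1
      have := hinj hfab
      have h6 := congrArg Subtype.val this
      exact Subtype.ext h6
    have hgsurj : Function.Surjective g := by
      intro z
      obtain ⟨v, hv⟩ := hsurj
        (fun j => if h : (j : ℕ) < m then 0 else z ⟨(j : ℕ) - m, by have := j.2; omega⟩)
      have hvc : ∀ j : Fin ℓ, (v : Fin D → ℝ) (Fin.castLE hℓ j)
          = if h : (j : ℕ) < m then 0 else z ⟨(j : ℕ) - m, by have := j.2; omega⟩ :=
        fun j => congrFun hv j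
      have hvK : (v : Fin D → ℝ) ∈ LinearMap.ker Pm := by
        rw [LinearMap.mem_ker]
        funext i
        show (v : Fin D → ℝ) (Fin.castLE (hm.trans hℓ) i) = 0
        have := hvc (Fin.castLE hm i)
        rw [dif_pos (show ((Fin.castLE hm i : Fin ℓ) : ℕ) < m from i.2)] at this
        exact this
      refine ⟨⟨(v : Fin D → ℝ), Submodule.mem_inf.mpr ⟨v.2, hvK⟩⟩, funext fun i => ?_⟩
      simp only [hg, LinearMap.coe_mk, AddHom.coe_mk]
      have hi : m + (i : ℕ) < ℓ := by have := i.2; omega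
      have := hvc ⟨m + (i : ℕ), hi⟩
      have e1 : Fin.castLE hℓ (⟨m + (i : ℕ), hi⟩ : Fin ℓ)
          = (⟨m + (i : ℕ), by have := i.2; omega⟩ : Fin D) := rfl
      rw [e1] at this
      rw [this, dif_neg (show ¬ (((⟨m + (i : ℕ), hi⟩ : Fin ℓ) : ℕ) < m) by
        show ¬ (m + (i : ℕ) < m); omega)]
      congr 1
      exact Fin.ext (by show m + (i : ℕ) - m = (i : ℕ); omega)
    have := LinearEquiv.finrank_eq (LinearEquiv.ofBijective g ⟨hginj, hgsurj⟩)
    rw [this, Module.finrank_fin_fun]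
  · -- integrality of the slice direction
    ext z
    simp only [Set.mem_image, Set.mem_setOf_eq]
    constructor
    · rintro ⟨v, ⟨_, hvint⟩, rfl⟩
      exact fun i => hvint _
    · intro hzint
      set tz : Fin (ℓ - m) → ℤ := fun i => (hzint i).choose with htz
      have htz' : ∀ i, z i = (tz i : ℝ) := fun i => (hzint i).choose_spec
      obtain ⟨v, hvdir, hvint, hvc⟩ := key
        (fun j => if h : (j : ℕ) < m then 0 else tz ⟨(j : ℕ) - m, by have := j.2; omega⟩)
      have hvK : v ∈ LinearMap.ker Pm := by
        rw [LinearMap.mem_ker]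
        funext i
        show v (Fin.castLE (hm.trans hℓ) i) = 0
        have := hvc (Fin.castLE hm i)
        rw [dif_pos (show ((Fin.castLE hm i : Fin ℓ) : ℕ) < m from i.2)] at this
        simpa using this
      refine ⟨v, ⟨?_, hvint⟩, funext fun i => ?_⟩
      · rw [hdir]; exact Submodule.mem_inf.mpr ⟨hvdir, hvK⟩
      · have hi : m + (i : ℕ) < ℓ := by have := i.2; omega
        have := hvc ⟨m + (i : ℕ), hi⟩
        have e1 : Fin.castLE hℓ (⟨m + (i : ℕ), hi⟩ : Fin ℓ)
            = (⟨m + (i : ℕ), by have := i.2; omega⟩ : Fin D) := rfl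
        rw [e1] at this
        rw [this, dif_neg (show ¬ (((⟨m + (i : ℕ), hi⟩ : Fin ℓ) : ℕ) < m) by
          show ¬ (m + (i : ℕ) < m); omega), htz' i]
        congr 2
        exact Fin.ext (by show m + (i : ℕ) - m = (i : ℕ); omega)
end

section
/- Let φ: R^D → R^D be an affine map x ↦ α + xM with block matrix M = [[A, C], [O, B]] where A is ℓ×ℓ, B is (D−ℓ)×(D−ℓ) invertible, and O is the zero block. If A is unimodular (integer matrix with determinant ±1), B and C are integer matrices, and α is an integer vector, then φ maps any ℓ-dimensional integral affine subspace of R^D to an ℓ-dimensional integral affine subspace. -/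
open Matrix

/-- An affine subspace `W ⊆ ℝ^D` of dimension `ℓ` is integral if it contains a lattice point
and the projection to the first `ℓ` coordinates maps `lin(W) ∩ ℤ^D` onto `ℤ^ℓ`. -/
def IsIntegralAffine (D ℓ : ℕ) (h : ℓ ≤ D) (W : AffineSubspace ℝ (Fin D → ℝ)) : Prop :=
  (∃ x ∈ W, isInt x) ∧
  (fun x : Fin D → ℝ => fun i : Fin ℓ => x (Fin.castLE h i)) ''
    {x | x ∈ W.direction ∧ isInt x} = {z : Fin ℓ → ℝ | isInt z}

/-!
The linear part `x ↦ x M` is block upper triangular with invertible diagonal blocks, hence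
injective, so it preserves dimension; it has integer entries, so it maps lattice points to
lattice points. Because the lower-left block vanishes, the first `ℓ` coordinates of `x M` are
those of `x` multiplied by `A`, and a unimodular `A` permutes `ℤ^ℓ`. Hence the projection of the
lattice in the new direction space is again all of `ℤ^ℓ`.
-/

section Blocks

variable {R : Type*} {D ℓ : ℕ} (h : ℓ ≤ D)

def finSumFinEquivOfLE : Fin ℓ ⊕ Fin (D - ℓ) ≃ Fin D :=
  finSumFinEquiv.trans (finCongr (by omega))

def Fin.addLE (k : Fin (D - ℓ)) : Fin D := ⟨ℓ + k, by omega⟩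

lemma submatrix_finSumFinEquivOfLE_eq_fromBlocks [Zero R] (M : Matrix (Fin D) (Fin D) R)
    (hO : ∀ i j : Fin D, ℓ ≤ (i : ℕ) → (j : ℕ) < ℓ → M i j = 0) :
    M.submatrix (finSumFinEquivOfLE h) (finSumFinEquivOfLE h) =
      fromBlocks (M.submatrix (Fin.castLE h) (Fin.castLE h))
        (M.submatrix (Fin.castLE h) (Fin.addLE h)) 0
        (M.submatrix (Fin.addLE h) (Fin.addLE h)) := by
  ext (i | i) (j | j)
  · rfl
  · rfl
  · exact hO _ _ (Nat.le_add_right ℓ i) j.2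
  · rfl

lemma det_eq_det_mul_det_of_lowerLeft_eq_zero [CommRing R] (M : Matrix (Fin D) (Fin D) R)
    (hO : ∀ i j : Fin D, ℓ ≤ (i : ℕ) → (j : ℕ) < ℓ → M i j = 0) :
    M.det = (M.submatrix (Fin.castLE h) (Fin.castLE h)).det *
      (M.submatrix (Fin.addLE h) (Fin.addLE h)).det := by
  rw [← det_submatrix_equiv_self (finSumFinEquivOfLE h),
    submatrix_finSumFinEquivOfLE_eq_fromBlocks h M hO, det_fromBlocks_zero₂₁]

lemma vecMul_comp_castLE_of_lowerLeft_eq_zero [NonUnitalNonAssocSemiring R]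
    (M : Matrix (Fin D) (Fin D) R)
    (hO : ∀ i j : Fin D, ℓ ≤ (i : ℕ) → (j : ℕ) < ℓ → M i j = 0) (v : Fin D → R) :
    (v ᵥ* M) ∘ Fin.castLE h =
      (v ∘ Fin.castLE h) ᵥ* M.submatrix (Fin.castLE h) (Fin.castLE h) := by
  calc (v ᵥ* M) ∘ Fin.castLE h = ((v ᵥ* M) ∘ finSumFinEquivOfLE h) ∘ Sum.inl := rfl
    _ = ((v ∘ finSumFinEquivOfLE h) ᵥ*
          M.submatrix (finSumFinEquivOfLE h) (finSumFinEquivOfLE h)) ∘ Sum.inl := by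
      simp only [submatrix_vecMul_equiv, Function.comp_assoc, Equiv.self_comp_symm,
        Function.comp_id]
    _ = (v ∘ Fin.castLE h) ᵥ* M.submatrix (Fin.castLE h) (Fin.castLE h) := by
      rw [submatrix_finSumFinEquivOfLE_eq_fromBlocks h M hO, vecMul_fromBlocks,
        Sum.elim_comp_inl, vecMul_zero, add_zero]
      rfl

end Blocks

lemma isInt_add {n : ℕ} {x y : Fin n → ℝ} (hx : isInt x) (hy : isInt y) : isInt (x + y) := by
  intro i
  obtain ⟨a, ha⟩ := hx i
  obtain ⟨b, hb⟩ := hy i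
  exact ⟨a + b, by simp [ha, hb]⟩

lemma isInt_vecMul {m n : ℕ} {x : Fin m → ℝ} {M : Matrix (Fin m) (Fin n) ℝ}
    (hM : ∀ i j, ∃ z : ℤ, M i j = z) (hx : isInt x) : isInt (x ᵥ* M) := by
  choose a ha using hx
  choose N hN using hM
  have hx' : x = Int.castRingHom ℝ ∘ a := funext ha
  have hM' : M = (Matrix.of N).map (Int.castRingHom ℝ) := Matrix.ext hN
  exact fun j => ⟨(a ᵥ* Matrix.of N) j, by rw [hx', hM', ← RingHom.map_vecMul]; rfl⟩

lemma exists_isInt_vecMul_eq {n : ℕ} (A : Matrix (Fin n) (Fin n) ℤ) (hA : IsUnit A.det)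
    {z : Fin n → ℝ} (hz : isInt z) : ∃ u, isInt u ∧ u ᵥ* A.map (↑) = z := by
  choose w hw using hz
  refine ⟨fun i => ((w ᵥ* A⁻¹) i : ℝ), fun i => ⟨_, rfl⟩, funext fun j => ?_⟩
  have := (RingHom.map_vecMul (Int.castRingHom ℝ) A (w ᵥ* A⁻¹) j).symm
  rw [vecMul_vecMul, nonsing_inv_mul _ hA, vecMul_one] at this
  exact this.trans (hw j).symm

lemma exists_int_of_blocks {D ℓ : ℕ} (h : ℓ ≤ D) (M : Matrix (Fin D) (Fin D) ℝ)
    (A : Matrix (Fin ℓ) (Fin ℓ) ℤ)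
    (hA : ∀ i j : Fin ℓ, M (Fin.castLE h i) (Fin.castLE h j) = (A i j : ℝ))
    (hO : ∀ i j : Fin D, ℓ ≤ (i : ℕ) → (j : ℕ) < ℓ → M i j = 0)
    (hC : ∀ i j : Fin D, (i : ℕ) < ℓ → ℓ ≤ (j : ℕ) → ∃ z : ℤ, M i j = (z : ℝ))
    (hB : ∀ i j : Fin D, ℓ ≤ (i : ℕ) → ℓ ≤ (j : ℕ) → ∃ z : ℤ, M i j = (z : ℝ))
    (i j : Fin D) : ∃ z : ℤ, M i j = z := by
  rcases lt_or_ge (i : ℕ) ℓ with hi | hi <;> rcases lt_or_ge (j : ℕ) ℓ with hj | hj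
  · exact ⟨_, hA ⟨i, hi⟩ ⟨j, hj⟩⟩
  · exact hC i j hi hj
  · exact ⟨0, by simp [hO i j hi hj]⟩
  · exact hB i j hi hj

def vecMulAffine {R m n : Type*} [CommRing R] [Fintype m] (α : n → R) (M : Matrix m n R) :
    (m → R) →ᵃ[R] (n → R) where
  toFun x := α + x ᵥ* M
  linear := M.vecMulLinear
  map_vadd' p v := by
    simp only [vadd_eq_add, vecMulLinear_apply, add_vecMul]
    abel

theorem IsIntegralAffine.map_vecMulAffine {D ℓ : ℕ} {h : ℓ ≤ D}
    {W : AffineSubspace ℝ (Fin D → ℝ)} (hW : IsIntegralAffine D ℓ h W)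
    {α : Fin D → ℝ} (hα : isInt α)
    {M : Matrix (Fin D) (Fin D) ℝ} (hM : ∀ i j, ∃ z : ℤ, M i j = z)
    {A : Matrix (Fin ℓ) (Fin ℓ) ℤ} (hAdet : IsUnit A.det)
    (hA : M.submatrix (Fin.castLE h) (Fin.castLE h) = A.map (↑))
    (hO : ∀ i j : Fin D, ℓ ≤ (i : ℕ) → (j : ℕ) < ℓ → M i j = 0) :
    IsIntegralAffine D ℓ h (W.map (vecMulAffine α M)) := by
  obtain ⟨⟨x, hxW, hx⟩, hproj⟩ := hW
  refine ⟨⟨α + x ᵥ* M, AffineSubspace.mem_map.2 ⟨x, hxW, rfl⟩,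
    isInt_add hα (isInt_vecMul hM hx)⟩, subset_antisymm ?_ fun z hz => ?_⟩
  · rintro _ ⟨y, ⟨-, hy⟩, rfl⟩ i
    exact hy _
  obtain ⟨u, hu, rfl⟩ := exists_isInt_vecMul_eq A hAdet hz
  obtain ⟨y, ⟨hyW, hy⟩, rfl⟩ := hproj.symm.subset hu
  refine ⟨y ᵥ* M, ⟨?_, isInt_vecMul hM hy⟩, ?_⟩
  · rw [AffineSubspace.map_direction]
    exact Submodule.mem_map_of_mem hyW
  · rw [← hA]
    exact vecMul_comp_castLE_of_lowerLeft_eq_zero h M hO y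

/-- Let `φ : ℝ^D → ℝ^D`, `φ(x) = α + x M` with `M = [[A, C], [0, B]]` block upper triangular,
`A` an `ℓ×ℓ` unimodular integer matrix, `B` an invertible `(D-ℓ)×(D-ℓ)` integer matrix,
`C` an integer matrix, and `α` an integer vector. Then `φ` maps every `ℓ`-dimensional
integral affine subspace onto an `ℓ`-dimensional integral affine subspace. -/
theorem affine_map_preserves_integrality (D ℓ : ℕ) (hℓ : ℓ ≤ D)
    (M : Matrix (Fin D) (Fin D) ℝ) (α : Fin D → ℝ) (hα : isInt α)
    (A : Matrix (Fin ℓ) (Fin ℓ) ℤ) (hAdet : A.det = 1 ∨ A.det = -1)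
    (hA : ∀ i j : Fin ℓ, M (Fin.castLE hℓ i) (Fin.castLE hℓ j) = (A i j : ℝ))
    (hO : ∀ i j : Fin D, ℓ ≤ (i : ℕ) → (j : ℕ) < ℓ → M i j = 0)
    (hC : ∀ i j : Fin D, (i : ℕ) < ℓ → ℓ ≤ (j : ℕ) → ∃ z : ℤ, M i j = (z : ℝ))
    (hBint : ∀ i j : Fin D, ℓ ≤ (i : ℕ) → ℓ ≤ (j : ℕ) → ∃ z : ℤ, M i j = (z : ℝ))
    (hBinv : (Matrix.of fun i j : Fin (D - ℓ) =>
        M (⟨ℓ + (i : ℕ), by have := i.2; omega⟩ : Fin D)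
          (⟨ℓ + (j : ℕ), by have := j.2; omega⟩ : Fin D)).det ≠ 0)
    (W : AffineSubspace ℝ (Fin D → ℝ))
    (hWdim : Module.finrank ℝ W.direction = ℓ)
    (hWint : IsIntegralAffine D ℓ hℓ W) :
    ∃ W' : AffineSubspace ℝ (Fin D → ℝ),
      (W' : Set (Fin D → ℝ)) = (fun x => α + Matrix.vecMul x M) '' (W : Set (Fin D → ℝ)) ∧
      Module.finrank ℝ W'.direction = ℓ ∧
      IsIntegralAffine D ℓ hℓ W' := by
  have hAunit : IsUnit A.det := Int.isUnit_iff.2 hAdet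
  have hAblock : M.submatrix (Fin.castLE hℓ) (Fin.castLE hℓ) = A.map (↑) := Matrix.ext hA
  have hinj : Function.Injective M.vecMulLinear := by
    refine vecMul_injective_of_isUnit ((isUnit_iff_isUnit_det M).2 ?_)
    rw [det_eq_det_mul_det_of_lowerLeft_eq_zero hℓ M hO, hAblock, ← Int.cast_det]
    exact (hAunit.map (Int.castRingHom ℝ)).mul (isUnit_iff_ne_zero.2 hBinv)
  refine ⟨W.map (vecMulAffine α M), AffineSubspace.coe_map _ _, ?_,
    hWint.map_vecMulAffine hα (exists_int_of_blocks hℓ M A hA hO hC hBint) hAunit hAblock hO⟩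
  rw [AffineSubspace.map_direction, ← hWdim]
  exact (Submodule.equivMapOfInjective _ hinj _).finrank_eq.symm
end
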